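/- Let G be a matching covered graph, let v_0 be a vertex of G of degree two having two distinct neighbors, and let K be a graph with maximum degree at most 3. If the bicontraction G/v_0 is K-based, then G is K-based. -/

import Mathlib

open SimpleGraph

variable {V : Type*}

/-- A matching covered graph: a connected graph with at least two vertices in which
every edge belongs to some perfect matching. -/
def MatchingCovered (G : SimpleGraph V) : Prop :=
  G.Connected ∧ Nontrivial V ∧
    ∀ e ∈ G.edgeSet, ∃ M : G.Subgraph, M.IsPerfectMatching ∧ e ∈ M.edgeSet

/-- A cycle `C` is conformal if `G - V(C)` has a perfect matching. -/
def ConformalCycle (G : SimpleGraph V) {u : V} (C : G.Walk u u) : Prop :=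
  ∃ M : G.Subgraph, M.IsMatching ∧ M.verts = {w | w ∉ C.support}

/-- A matching covered graph is cycle-extendable if each of its even cycles is conformal. -/
def CycleExtendable (G : SimpleGraph V) : Prop :=
  ∀ ⦃u : V⦄ (C : G.Walk u u), C.IsCycle → Even C.length → ConformalCycle G C
/-- `G` contains a subgraph which is a subdivision of `K` in which the path replacing
each edge has length satisfying `okLen`: there are internally disjoint paths in `G`
joining the images of the branch vertices. -/
def HasSubdiv {W : Type*} (G : SimpleGraph V) (K : SimpleGraph W) (okLen : ℕ → Prop) : Prop :=
  ∃ (f : W ↪ V) (p : ∀ a b : W, K.Adj a b → G.Walk (f a) (f b)),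
    (∀ a b hab, (p a b hab).IsPath) ∧
    (∀ a b hab, okLen (p a b hab).length) ∧
    (∀ a b hab (c : W), f c ∈ (p a b hab).support → c = a ∨ c = b) ∧
    (∀ a b hab a' b' hab', s(a, b) ≠ s(a', b') →
      ∀ w, w ∈ (p a b hab).support → w ∈ (p a' b' hab').support →
        (w = f a ∨ w = f b) ∧ (w = f a' ∨ w = f b'))

/-- `G` is `K`-based: some subgraph of `G` is a bisubdivision of `K` (each edge of `K`
is replaced by an odd path, i.e. subdivided by an even number of vertices). -/
def IsBasedOn {W : Type*} (G : SimpleGraph V) (K : SimpleGraph W) : Prop :=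
  HasSubdiv G K Odd

/-- `G` contains a subdivision of `K`. -/
def ContainsSubdivision {W : Type*} (G : SimpleGraph V) (K : SimpleGraph W) : Prop :=
  HasSubdiv G K fun _ => True

/-- Planarity, via Kuratowski's characterization: no subdivision of `K₅` nor of `K₃,₃`. -/
def IsPlanar (G : SimpleGraph V) : Prop :=
  ¬ ContainsSubdivision G (⊤ : SimpleGraph (Fin 5)) ∧
  ¬ ContainsSubdivision G (completeBipartiteGraph (Fin 3) (Fin 3))

/-- `G` is `K₂,₃`-based: it contains a subgraph that is a bisubdivision of `K₂,₃`. -/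
def K23Based (G : SimpleGraph V) : Prop :=
  IsBasedOn G (completeBipartiteGraph (Fin 2) (Fin 3))

/-- The set of original vertices represented by a vertex of the bicontraction `G/v₀`:
the contraction vertex (here `v₁`) represents `{v₀, v₁, v₂}` and every other vertex
represents itself. -/
def bicontractFiber [DecidableEq V] (v₀ v₁ v₂ : V) (x : ↥({v₀, v₂}ᶜ : Set V)) : Set V :=
  if (x : V) = v₁ then {v₀, v₁, v₂} else {(x : V)}

/-- The bicontraction `G/v₀` of a vertex `v₀` of degree two with distinct neighbors
`v₁` and `v₂`: both edges `v₀v₁` and `v₀v₂` are contracted, i.e. `v₀, v₁, v₂` are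
identified into a single vertex (represented by `v₁`). -/
def bicontract [DecidableEq V] (G : SimpleGraph V) (v₀ v₁ v₂ : V) :
    SimpleGraph ↥({v₀, v₂}ᶜ : Set V) where
  Adj x y := x ≠ y ∧ ∃ a ∈ bicontractFiber v₀ v₁ v₂ x, ∃ b ∈ bicontractFiber v₀ v₁ v₂ y,
    G.Adj a b
  symm := by
    constructor
    rintro x y ⟨hxy, a, ha, b, hb, hab⟩
    exact ⟨hxy.symm, b, hb, a, ha, hab.symm⟩
  loopless := by constructor; rintro x ⟨hxx, -⟩; exact hxx rfl

/-!
A bisubdivision of `K` in `G/v₀` lifts to `G` path by path. A path avoiding the contraction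
vertex lifts verbatim. Where a path passes through the contraction vertex, each of its two
edges there comes from an edge of `G` at `v₁` or at `v₂`; if they disagree, the detour
`v₁ v₀ v₂` joins them, adding two to the length and so keeping it odd. If the contraction vertex
is a branch vertex, it is replaced by whichever of `v₁, v₂` carries all but at most one of its
at most three edges; only that one edge takes the detour through `v₀`, so distinct paths still
meet only at branch vertices. For this count to be well defined, the paths are first oriented
consistently (`q b a = (q a b).reverse`).
-/

theorem Set.subsingleton_or_subsingleton_of_ncard_le_three {α : Type*} {N : Set α}
    (hN : N.Finite) (h3 : N.ncard ≤ 3) {P Q : α → Prop} (hPQ : ∀ a ∈ N, P a ∨ Q a) :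
    {a ∈ N | ¬P a}.Subsingleton ∨ {a ∈ N | ¬Q a}.Subsingleton := by
  set A := {a ∈ N | ¬P a}
  set B := {a ∈ N | ¬Q a}
  have hA : A.Finite := hN.subset (sep_subset _ _)
  have hB : B.Finite := hN.subset (sep_subset _ _)
  have hdisj : Disjoint A B := disjoint_left.2 fun a ha hb => (hPQ a ha.1).elim ha.2 hb.2
  have hunion := ncard_le_ncard (union_subset (sep_subset N _) (sep_subset N _) : A ∪ B ⊆ N) hN
  rw [ncard_union_eq hdisj hA hB] at hunion
  rcases (by omega : A.ncard ≤ 1 ∨ B.ncard ≤ 1) with h | h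
  · exact Or.inl fun a ha b hb => (ncard_le_one hA).1 h a ha b hb
  · exact Or.inr fun a ha b hb => (ncard_le_one hB).1 h a ha b hb

namespace SimpleGraph.Walk

variable {G : SimpleGraph V} {u v w : V}

theorem IsPath.append {p : G.Walk u v} {q : G.Walk v w} (hp : p.IsPath) (hq : q.IsPath)
    (h : ∀ x ∈ p.support, x ∈ q.support → x = v) : (p.append q).IsPath := by
  have hq' : (v :: q.support.tail).Nodup := by rw [cons_tail_support]; exact hq.support_nodup
  rw [isPath_def, support_append, List.nodup_append]
  refine ⟨hp.support_nodup, (List.nodup_cons.1 hq').2, fun x hx y hy hxy => ?_⟩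
  subst hxy
  exact (List.nodup_cons.1 hq').1 (h x hx (List.mem_of_mem_tail hy) ▸ hy)

theorem IsPath.eq_of_mem_support_of_mem_support {p : G.Walk u v} {q : G.Walk v w}
    (h : (p.append q).IsPath) {x : V} (hp : x ∈ p.support) (hq : x ∈ q.support) : x = v := by
  by_contra hxv
  exact h.ne_of_mem_support_of_append hxv hp hq rfl

end SimpleGraph.Walk

section Subdivision

variable {W : Type*} {G : SimpleGraph V} {K : SimpleGraph W} {okLen : ℕ → Prop}

structure IsSubdivision (G : SimpleGraph V) (K : SimpleGraph W) (okLen : ℕ → Prop) (f : W ↪ V)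
    (p : ∀ a b : W, K.Adj a b → G.Walk (f a) (f b)) : Prop where
  isPath : ∀ a b hab, (p a b hab).IsPath
  okLen_length : ∀ a b hab, okLen (p a b hab).length
  eq_or_eq_of_mem_support : ∀ a b hab c, f c ∈ (p a b hab).support → c = a ∨ c = b
  internally_disjoint : ∀ a b hab a' b' hab', s(a, b) ≠ s(a', b') →
    ∀ w, w ∈ (p a b hab).support → w ∈ (p a' b' hab').support →
      (w = f a ∨ w = f b) ∧ (w = f a' ∨ w = f b')

theorem hasSubdiv_iff : HasSubdiv G K okLen ↔ ∃ f p, IsSubdivision G K okLen f p :=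
  ⟨fun ⟨f, p, h₁, h₂, h₃, h₄⟩ => ⟨f, p, ⟨h₁, h₂, h₃, h₄⟩⟩,
    fun ⟨f, p, ⟨h₁, h₂, h₃, h₄⟩⟩ => ⟨f, p, h₁, h₂, h₃, h₄⟩⟩

theorem IsSubdivision.exists_reverse_eq {f : W ↪ V} {p : ∀ a b : W, K.Adj a b → G.Walk (f a) (f b)}
    (hp : IsSubdivision G K okLen f p) :
    ∃ p', IsSubdivision G K okLen f p' ∧ ∀ a b hab, p' b a hab.symm = (p' a b hab).reverse := by
  let := IsWellOrder.linearOrder (WellOrderingRel (α := W))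
  let p' a b hab := if a ≤ b then p a b hab else (p b a hab.symm).reverse
  have hp' : ∀ a b hab, p' a b hab = p a b hab ∨ p' a b hab = (p b a hab.symm).reverse := by
    intro a b hab
    by_cases h : a ≤ b
    · exact Or.inl (if_pos h)
    · exact Or.inr (if_neg h)
  refine ⟨p', ⟨fun a b hab => ?_, fun a b hab => ?_, fun a b hab c => ?_, ?_⟩, fun a b hab => ?_⟩
  · rcases hp' a b hab with h | h <;> rw [h]
    exacts [hp.isPath a b hab, (hp.isPath b a hab.symm).reverse]
  · rcases hp' a b hab with h | h <;> rw [h]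
    exacts [hp.okLen_length a b hab, by simpa using hp.okLen_length b a hab.symm]
  · rcases hp' a b hab with h | h <;> rw [h]
    · exact hp.eq_or_eq_of_mem_support a b hab c
    · simpa [or_comm] using hp.eq_or_eq_of_mem_support b a hab.symm c
  · intro a b hab a' b' hab' hne w hw hw'
    rcases hp' a b hab with h | h <;> rcases hp' a' b' hab' with h' | h' <;>
      simp only [h, h', Walk.support_reverse, List.mem_reverse] at hw hw'
    · exact hp.internally_disjoint a b hab a' b' hab' hne w hw hw'
    · exact (hp.internally_disjoint a b hab b' a' hab'.symm (by rwa [Sym2.eq_swap (a := b')])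
        w hw hw').imp id Or.symm
    · exact (hp.internally_disjoint b a hab.symm a' b' hab' (by rwa [Sym2.eq_swap (a := b)])
        w hw hw').imp Or.symm id
    · exact (hp.internally_disjoint b a hab.symm b' a' hab'.symm
        (by rwa [Sym2.eq_swap (a := b), Sym2.eq_swap (a := b')]) w hw hw').imp Or.symm Or.symm
  · rcases lt_or_gt_of_ne (K.ne_of_adj hab) with h | h <;> simp [p', h.le, h.not_ge]

end Subdivision

namespace Bicontraction

variable {v₀ v₁ v₂ s w : V} {x y : ↥({v₀, v₂}ᶜ : Set V)}

theorem coe_notMem_of_ne (hx : (x : V) ≠ v₁) : (x : V) ∉ ({v₀, v₁, v₂} : Set V) := by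
  have h := x.2
  simp only [Set.mem_compl_iff, Set.mem_insert_iff, Set.mem_singleton_iff, not_or] at h ⊢
  exact ⟨h.1, hx, h.2⟩

variable [DecidableEq V] {G : SimpleGraph V}

theorem bicontractFiber_of_eq (hx : (x : V) = v₁) :
    bicontractFiber v₀ v₁ v₂ x = {v₀, v₁, v₂} :=
  if_pos hx

theorem bicontractFiber_of_ne (hx : (x : V) ≠ v₁) : bicontractFiber v₀ v₁ v₂ x = {(x : V)} :=
  if_neg hx

theorem coe_mem_bicontractFiber (x : ↥({v₀, v₂}ᶜ : Set V)) :
    (x : V) ∈ bicontractFiber v₀ v₁ v₂ x := by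
  by_cases hx : (x : V) = v₁
  · rw [bicontractFiber_of_eq hx, hx]
    exact Set.mem_insert_of_mem _ (Set.mem_insert _ _)
  · rw [bicontractFiber_of_ne hx]
    exact Set.mem_singleton _

theorem eq_of_mem_bicontractFiber (hx : w ∈ bicontractFiber v₀ v₁ v₂ x)
    (hy : w ∈ bicontractFiber v₀ v₁ v₂ y) : x = y := by
  by_cases hx₁ : (x : V) = v₁ <;> by_cases hy₁ : (y : V) = v₁
  · exact Subtype.ext (hx₁.trans hy₁.symm)
  · rw [bicontractFiber_of_eq hx₁] at hx
    rw [bicontractFiber_of_ne hy₁, Set.mem_singleton_iff] at hy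
    exact absurd (hy ▸ hx) (coe_notMem_of_ne hy₁)
  · rw [bicontractFiber_of_ne hx₁, Set.mem_singleton_iff] at hx
    rw [bicontractFiber_of_eq hy₁] at hy
    exact absurd (hx ▸ hy) (coe_notMem_of_ne hx₁)
  · rw [bicontractFiber_of_ne hx₁, Set.mem_singleton_iff] at hx
    rw [bicontractFiber_of_ne hy₁, Set.mem_singleton_iff] at hy
    exact Subtype.ext (hx.symm.trans hy)

def bicontractRep (v₀ v₁ v₂ s : V) (x : ↥({v₀, v₂}ᶜ : Set V)) : V :=
  if (x : V) = v₁ then s else x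

theorem bicontractRep_of_eq (hx : (x : V) = v₁) : bicontractRep v₀ v₁ v₂ s x = s :=
  if_pos hx

theorem bicontractRep_of_ne (hx : (x : V) ≠ v₁) : bicontractRep v₀ v₁ v₂ s x = x :=
  if_neg hx

theorem bicontractRep_mem_bicontractFiber (hs : s ∈ ({v₀, v₁, v₂} : Set V))
    (x : ↥({v₀, v₂}ᶜ : Set V)) : bicontractRep v₀ v₁ v₂ s x ∈ bicontractFiber v₀ v₁ v₂ x := by
  by_cases hx : (x : V) = v₁
  · rwa [bicontractRep_of_eq hx, bicontractFiber_of_eq hx]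
  · rw [bicontractRep_of_ne hx]
    exact coe_mem_bicontractFiber x

theorem bicontractRep_injective (hs : s ∈ ({v₀, v₁, v₂} : Set V)) :
    Function.Injective (bicontractRep v₀ v₁ v₂ s) := fun x y h =>
  eq_of_mem_bicontractFiber (bicontractRep_mem_bicontractFiber hs x)
    (h ▸ bicontractRep_mem_bicontractFiber hs y)

theorem adj_of_bicontract_adj (hx : (x : V) ≠ v₁) (hy : (y : V) ≠ v₁)
    (h : (bicontract G v₀ v₁ v₂).Adj x y) : G.Adj x y := by
  obtain ⟨-, a, ha, b, hb, hab⟩ := h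
  rw [bicontractFiber_of_ne hx, Set.mem_singleton_iff] at ha
  rw [bicontractFiber_of_ne hy, Set.mem_singleton_iff] at hb
  rwa [← ha, ← hb]

theorem adj_or_adj_of_bicontract_adj (hnbr : G.neighborSet v₀ = {v₁, v₂}) (hx : (x : V) = v₁)
    (h : (bicontract G v₀ v₁ v₂).Adj x y) : G.Adj v₁ y ∨ G.Adj v₂ y := by
  obtain ⟨hxy, a, ha, b, hb, hab⟩ := h
  have hy : (y : V) ≠ v₁ := fun hy => hxy (Subtype.ext (hx.trans hy.symm))
  rw [bicontractFiber_of_eq hx] at ha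
  rw [bicontractFiber_of_ne hy, Set.mem_singleton_iff] at hb
  subst hb
  rcases ha with rfl | rfl | rfl
  · have hy₁₂ : (y : V) ∈ ({v₁, v₂} : Set V) := hnbr ▸ hab
    exact absurd (Set.mem_insert_of_mem _ hy₁₂) (coe_notMem_of_ne hy)
  · exact Or.inl hab
  · exact Or.inr hab

theorem adj_or_adj_snd (hnbr : G.neighborSet v₀ = {v₁, v₂}) (q : (bicontract G v₀ v₁ v₂).Walk x y)
    (hx : (x : V) = v₁) (hxy : x ≠ y) : G.Adj v₁ q.snd ∨ G.Adj v₂ q.snd :=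
  adj_or_adj_of_bicontract_adj hnbr hx (q.adj_snd (Walk.not_nil_of_ne hxy))

theorem exists_walk_support_eq_map_coe (q : (bicontract G v₀ v₁ v₂).Walk x y)
    (hq : ∀ u ∈ q.support, (u : V) ≠ v₁) :
    ∃ L : G.Walk x y, L.length = q.length ∧ L.support = q.support.map Subtype.val := by
  induction q with
  | nil => exact ⟨.nil, rfl, rfl⟩
  | cons h q ih =>
    obtain ⟨L, hlen, hsup⟩ := ih fun u hu => hq u (List.mem_cons_of_mem _ hu)
    refine ⟨.cons (adj_of_bicontract_adj (hq _ q.support.mem_cons_self) ?_ h) L, ?_, ?_⟩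
    · exact hq _ (List.mem_cons_of_mem _ q.start_mem_support)
    · simp [hlen]
    · simp [hsup]

theorem exists_lift_from_contraction (hnbr : G.neighborSet v₀ = {v₁, v₂}) (hs : s = v₁ ∨ s = v₂)
    (q : (bicontract G v₀ v₁ v₂).Walk x y) (hq : q.IsPath) (hx : (x : V) = v₁)
    (hy : (y : V) ≠ v₁) :
    ∃ L : G.Walk s y, L.IsPath ∧ L.length ≡ q.length [MOD 2] ∧
      (∀ w ∈ L.support, ∃ u ∈ q.support, w ∈ bicontractFiber v₀ v₁ v₂ u) ∧
      (G.Adj s q.snd → ∀ w ∈ L.support, w ∈ ({v₀, v₁, v₂} : Set V) → w = s) := by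
  cases q with
  | nil => exact absurd hx hy
  | @cons _ m _ h r =>
    rw [Walk.cons_isPath_iff] at hq
    have hr : ∀ u ∈ r.support, (u : V) ≠ v₁ := fun u hu he =>
      hq.2 (Subtype.ext (he.trans hx.symm) ▸ hu)
    obtain ⟨B, hBlen, hBsup⟩ := exists_walk_support_eq_map_coe r hr
    have hB : B.IsPath := by
      rw [Walk.isPath_def, hBsup]
      exact hq.1.support_nodup.map Subtype.val_injective
    have hBT : ∀ w ∈ B.support, w ∉ ({v₀, v₁, v₂} : Set V) := by
      rw [hBsup]
      rintro _ hw
      obtain ⟨u, hu, rfl⟩ := List.mem_map.1 hw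
      exact coe_notMem_of_ne (hr u hu)
    have hBover : ∀ w ∈ B.support, ∃ u ∈ (r.cons h).support, w ∈ bicontractFiber v₀ v₁ v₂ u := by
      rw [hBsup]
      rintro _ hw
      obtain ⟨u, hu, rfl⟩ := List.mem_map.1 hw
      exact ⟨u, List.mem_cons_of_mem _ hu, coe_mem_bicontractFiber u⟩
    have hxover : ∀ w ∈ ({v₀, v₁, v₂} : Set V),
        ∃ u ∈ (r.cons h).support, w ∈ bicontractFiber v₀ v₁ v₂ u :=
      fun w hw => ⟨x, Walk.start_mem_support _, by rwa [bicontractFiber_of_eq hx]⟩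
    have hsT : s ∈ ({v₀, v₁, v₂} : Set V) := Set.mem_insert_of_mem _ hs
    rw [Walk.snd_cons]
    by_cases hsm : G.Adj s m
    · refine ⟨.cons hsm B, ?_, ?_, ?_, fun _ w hw hwT => ?_⟩
      · exact (Walk.cons_isPath_iff _ _).2 ⟨hB, fun h => hBT s h hsT⟩
      · simp [Nat.ModEq, hBlen]
      · rintro w (_ | ⟨_, hw⟩)
        exacts [hxover s hsT, hBover w hw]
      · rcases List.mem_cons.1 hw with rfl | hw
        exacts [rfl, absurd hwT (hBT w hw)]
    · -- detour `s v₀ t m`, where `t` is the other neighbour of `v₀`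
      obtain ⟨t, ht, htm⟩ : ∃ t, (t = v₁ ∨ t = v₂) ∧ G.Adj t m := by
        rcases adj_or_adj_of_bicontract_adj hnbr hx h with h | h
        exacts [⟨v₁, Or.inl rfl, h⟩, ⟨v₂, Or.inr rfl, h⟩]
      have htT : t ∈ ({v₀, v₁, v₂} : Set V) := Set.mem_insert_of_mem _ ht
      have hadj₀ : ∀ z, z = v₁ ∨ z = v₂ → G.Adj v₀ z := fun z hz => by
        rw [← mem_neighborSet, hnbr]
        exact hz
      refine ⟨.cons (hadj₀ s hs).symm (.cons (hadj₀ t ht) (.cons htm B)), ?_, ?_, ?_,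
        fun h => absurd h hsm⟩
      · simp only [Walk.cons_isPath_iff, Walk.support_cons, List.mem_cons, not_or]
        refine ⟨⟨⟨hB, fun h => hBT t h htT⟩, (hadj₀ t ht).ne, fun h => hBT v₀ h (by simp)⟩,
          (hadj₀ s hs).ne.symm, fun h => hsm (h ▸ htm), fun h => hBT s h hsT⟩
      · simp only [Walk.length_cons, hBlen, Nat.ModEq]
        omega
      · rintro w (_ | ⟨_, _ | ⟨_, _ | ⟨_, hw⟩⟩⟩)
        exacts [hxover s hsT, hxover v₀ (by simp), hxover t htT, hBover w hw]

theorem exists_lift_of_ends_ne (hnbr : G.neighborSet v₀ = {v₁, v₂})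
    (q : (bicontract G v₀ v₁ v₂).Walk x y) (hq : q.IsPath) (hx : (x : V) ≠ v₁)
    (hy : (y : V) ≠ v₁) :
    ∃ L : G.Walk x y, L.IsPath ∧ L.length ≡ q.length [MOD 2] ∧
      ∀ w ∈ L.support, ∃ u ∈ q.support, w ∈ bicontractFiber v₀ v₁ v₂ u := by
  by_cases hv : ∀ u ∈ q.support, (u : V) ≠ v₁
  · obtain ⟨L, hlen, hsup⟩ := exists_walk_support_eq_map_coe q hv
    refine ⟨L, ?_, by rw [hlen], fun w hw => ?_⟩
    · rw [Walk.isPath_def, hsup]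
      exact hq.support_nodup.map Subtype.val_injective
    · obtain ⟨u, hu, rfl⟩ := List.mem_map.1 (hsup ▸ hw)
      exact ⟨u, hu, coe_mem_bicontractFiber u⟩
  push Not at hv
  obtain ⟨u, hu, hu₁⟩ := hv
  obtain ⟨d₁, d₂, hd₁, hd₂, rfl⟩ := hq.mem_support_iff_exists_append.1 hu
  -- both halves leave the contraction vertex from the same `s`, chosen so that the first
  -- half needs no detour through `v₀`
  obtain ⟨s, hs, hsnd⟩ : ∃ s, (s = v₁ ∨ s = v₂) ∧ G.Adj s d₁.reverse.snd := by
    rcases adj_or_adj_snd hnbr d₁.reverse hu₁ fun h => hx (h ▸ hu₁) with h | h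
    exacts [⟨v₁, Or.inl rfl, h⟩, ⟨v₂, Or.inr rfl, h⟩]
  obtain ⟨L₁, hL₁, hlen₁, hover₁, hgood₁⟩ :=
    exists_lift_from_contraction hnbr hs d₁.reverse hd₁.reverse hu₁ hx
  obtain ⟨L₂, hL₂, hlen₂, hover₂, -⟩ := exists_lift_from_contraction hnbr hs d₂ hd₂ hu₁ hy
  refine ⟨L₁.reverse.append L₂, hL₁.reverse.append hL₂ fun w hw₁ hw₂ => ?_, ?_, fun w hw => ?_⟩
  · rw [Walk.support_reverse, List.mem_reverse] at hw₁
    by_contra hws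
    obtain ⟨u₁, hu₁', hw₁'⟩ := hover₁ w hw₁
    obtain ⟨u₂, hu₂', hw₂'⟩ := hover₂ w hw₂
    obtain rfl := eq_of_mem_bicontractFiber hw₁' hw₂'
    rw [Walk.support_reverse, List.mem_reverse] at hu₁'
    obtain rfl := hq.eq_of_mem_support_of_mem_support hu₁' hu₂'
    exact hws (hgood₁ hsnd w hw₁ (bicontractFiber_of_eq hu₁ ▸ hw₁'))
  · simpa using hlen₁.add hlen₂
  · rw [Walk.mem_support_append_iff, Walk.support_reverse, List.mem_reverse] at hw
    rcases hw with hw | hw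
    · obtain ⟨u, hu, hwu⟩ := hover₁ w hw
      rw [Walk.support_reverse, List.mem_reverse] at hu
      exact ⟨u, (Walk.mem_support_append_iff _ _).2 (Or.inl hu), hwu⟩
    · obtain ⟨u, hu, hwu⟩ := hover₂ w hw
      exact ⟨u, (Walk.mem_support_append_iff _ _).2 (Or.inr hu), hwu⟩

theorem exists_lift (hnbr : G.neighborSet v₀ = {v₁, v₂}) (hs : s = v₁ ∨ s = v₂)
    (q : (bicontract G v₀ v₁ v₂).Walk x y) (hq : q.IsPath) (hxy : x ≠ y) :
    ∃ L : G.Walk (bicontractRep v₀ v₁ v₂ s x) (bicontractRep v₀ v₁ v₂ s y),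
      L.IsPath ∧ L.length ≡ q.length [MOD 2] ∧
      (∀ w ∈ L.support, ∃ u ∈ q.support, w ∈ bicontractFiber v₀ v₁ v₂ u) ∧
      (((x : V) = v₁ ∧ G.Adj s q.snd) ∨ ((y : V) = v₁ ∧ G.Adj s q.penultimate) →
        ∀ w ∈ L.support, w ∈ ({v₀, v₁, v₂} : Set V) → w = s) := by
  by_cases hx : (x : V) = v₁
  · have hy : (y : V) ≠ v₁ := fun hy => hxy (Subtype.ext (hx.trans hy.symm))
    rw [bicontractRep_of_eq hx, bicontractRep_of_ne hy]
    obtain ⟨L, hL, hlen, hover, hgood⟩ := exists_lift_from_contraction hnbr hs q hq hx hy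
    exact ⟨L, hL, hlen, hover, fun h => hgood (h.resolve_right fun h => hy h.1).2⟩
  by_cases hy : (y : V) = v₁
  · rw [bicontractRep_of_ne hx, bicontractRep_of_eq hy]
    obtain ⟨L, hL, hlen, hover, hgood⟩ :=
      exists_lift_from_contraction hnbr hs q.reverse hq.reverse hy hx
    refine ⟨L.reverse, hL.reverse, by simpa using hlen, fun w hw => ?_, fun h w hw => ?_⟩
    · simpa using hover w (by simpa using hw)
    · exact hgood (by simpa using (h.resolve_left fun h => hx h.1).2) w (by simpa using hw)
  rw [bicontractRep_of_ne hx, bicontractRep_of_ne hy]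
  obtain ⟨L, hL, hlen, hover⟩ := exists_lift_of_ends_ne hnbr q hq hx hy
  exact ⟨L, hL, hlen, hover, fun h => (h.elim (hx ·.1) (hy ·.1)).elim⟩

variable {W : Type*} {K : SimpleGraph W}

theorem exists_adj_snd_all_but_one (hnbr : G.neighborSet v₀ = {v₁, v₂}) [Finite W]
    (hdeg : ∀ w : W, (K.neighborSet w).ncard ≤ 3) (f : W ↪ ↥({v₀, v₂}ᶜ : Set V))
    (q : ∀ a b : W, K.Adj a b → (bicontract G v₀ v₁ v₂).Walk (f a) (f b)) :
    ∃ s, (s = v₁ ∨ s = v₂) ∧ ∀ c, (f c : V) = v₁ →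
      {d ∈ K.neighborSet c | ¬∀ h : K.Adj c d, G.Adj s (q c d h).snd}.Subsingleton := by
  by_cases hc : ∃ c, (f c : V) = v₁
  · obtain ⟨c, hc⟩ := hc
    have huniq : ∀ c', (f c' : V) = v₁ → c' = c := fun c' hc' =>
      f.injective (Subtype.ext (hc'.trans hc.symm))
    have hPQ : ∀ d ∈ K.neighborSet c,
        (∀ h, G.Adj v₁ (q c d h).snd) ∨ (∀ h, G.Adj v₂ (q c d h).snd) := fun d hd =>
      (adj_or_adj_snd hnbr (q c d hd) hc (f.injective.ne hd.ne)).imp (fun h _ => h) (fun h _ => h)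
    rcases Set.subsingleton_or_subsingleton_of_ncard_le_three (Set.toFinite _) (hdeg c) hPQ
      with h | h
    · exact ⟨v₁, Or.inl rfl, fun c' hc' => huniq c' hc' ▸ h⟩
    · exact ⟨v₂, Or.inr rfl, fun c' hc' => huniq c' hc' ▸ h⟩
  · exact ⟨v₁, Or.inl rfl, fun c hc' => absurd ⟨c, hc'⟩ hc⟩

theorem isBasedOn_of_isSubdivision_bicontract (hnbr : G.neighborSet v₀ = {v₁, v₂})
    (hs : s = v₁ ∨ s = v₂) {f : W ↪ ↥({v₀, v₂}ᶜ : Set V)}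
    {q : ∀ a b : W, K.Adj a b → (bicontract G v₀ v₁ v₂).Walk (f a) (f b)}
    (hq : IsSubdivision (bicontract G v₀ v₁ v₂) K Odd f q)
    (hsymm : ∀ a b hab, q b a hab.symm = (q a b hab).reverse)
    (hdetour : ∀ c, (f c : V) = v₁ →
      {d ∈ K.neighborSet c | ¬∀ h : K.Adj c d, G.Adj s (q c d h).snd}.Subsingleton) :
    IsBasedOn G K := by
  have hsT : s ∈ ({v₀, v₁, v₂} : Set V) := Set.mem_insert_of_mem _ hs
  choose L hL hlen hover hgood using fun a b hab =>
    exists_lift hnbr hs (q a b hab) (hq.isPath a b hab) (f.injective.ne hab.ne)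
  have hbad : ∀ a b hab w, w ∈ (L a b hab).support → w ∈ ({v₀, v₁, v₂} : Set V) → w ≠ s →
      ∀ c, (f c : V) = v₁ → c = a ∨ c = b →
        ∃ d ∈ {d ∈ K.neighborSet c | ¬∀ h : K.Adj c d, G.Adj s (q c d h).snd},
          s(c, d) = s(a, b) := by
    intro a b hab w hw hwT hws c hc hcab
    have hnot := mt (fun h => hgood a b hab h w hw hwT) hws
    rcases hcab with rfl | rfl
    · exact ⟨b, ⟨hab, fun h => hnot (Or.inl ⟨hc, h hab⟩)⟩, rfl⟩
    · refine ⟨a, ⟨hab.symm, fun h => hnot (Or.inr ⟨hc, ?_⟩)⟩, Sym2.eq_swap⟩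
      have h' := h hab.symm
      rwa [hsymm, Walk.snd_reverse] at h'
  refine hasSubdiv_iff.2 ⟨f.trans ⟨_, bicontractRep_injective hsT⟩, L, ⟨hL, fun a b hab => ?_,
    fun a b hab c hc => ?_, fun a b hab a' b' hab' hne w hw hw' => ?_⟩⟩
  · exact Nat.odd_iff.2 (Eq.trans (hlen a b hab) (Nat.odd_iff.1 (hq.okLen_length a b hab)))
  · obtain ⟨u, hu, hcu⟩ := hover a b hab _ hc
    exact hq.eq_or_eq_of_mem_support a b hab c
      (eq_of_mem_bicontractFiber (bicontractRep_mem_bicontractFiber hsT (f c)) hcu ▸ hu)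
  obtain ⟨u, hu, hwu⟩ := hover a b hab w hw
  obtain ⟨u', hu', hwu'⟩ := hover a' b' hab' w hw'
  obtain rfl := eq_of_mem_bicontractFiber hwu hwu'
  have hends := hq.internally_disjoint a b hab a' b' hab' hne u hu hu'
  suffices hw : w = bicontractRep v₀ v₁ v₂ s u by
    subst hw
    exact ⟨hends.1.imp (congrArg _) (congrArg _), hends.2.imp (congrArg _) (congrArg _)⟩
  by_cases hu₁ : (u : V) = v₁
  · rw [bicontractRep_of_eq hu₁]
    by_contra hws
    -- then both edges detour at the same branch vertex, which `hdetour` allows for only one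
    rw [bicontractFiber_of_eq hu₁] at hwu
    obtain ⟨c, rfl, hcab⟩ : ∃ c, f c = u ∧ (c = a ∨ c = b) :=
      hends.1.elim (fun h => ⟨a, h.symm, Or.inl rfl⟩) (fun h => ⟨b, h.symm, Or.inr rfl⟩)
    have hcab' : c = a' ∨ c = b' := hends.2.imp (f.injective ·) (f.injective ·)
    obtain ⟨d, hd, hdab⟩ := hbad a b hab w hw hwu hws c hu₁ hcab
    obtain ⟨d', hd', hdab'⟩ := hbad a' b' hab' w hw' hwu hws c hu₁ hcab'
    exact hne (hdab.symm.trans (hdetour c hu₁ hd hd' ▸ hdab'))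
  · rw [bicontractRep_of_ne hu₁]
    rwa [bicontractFiber_of_ne hu₁] at hwu

end Bicontraction

theorem bicontract_based_implies_based_general {W : Type*} [Fintype W] [DecidableEq V]
    (G : SimpleGraph V) (v₀ v₁ v₂ : V)
    (hnbr : G.neighborSet v₀ = {v₁, v₂})
    (K : SimpleGraph W) (hdeg : ∀ w : W, (K.neighborSet w).ncard ≤ 3)
    (hbased : IsBasedOn (bicontract G v₀ v₁ v₂) K) :
    IsBasedOn G K := by
  obtain ⟨f, q, hq⟩ := hasSubdiv_iff.1 hbased
  obtain ⟨q, hq, hsymm⟩ := hq.exists_reverse_eq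
  obtain ⟨s, hs, hdetour⟩ := Bicontraction.exists_adj_snd_all_but_one hnbr hdeg f q
  exact Bicontraction.isBasedOn_of_isSubdivision_bicontract hnbr hs hq hsymm hdetour

/-- Let `G` be a matching covered graph and `v₀` a vertex of degree two
with two distinct neighbors `v₁, v₂`, and let `K` be a graph of maximum degree at most 3.
If the bicontraction `G/v₀` is `K`-based, then so is `G`. -/
theorem bicontract_based_implies_based {W : Type*} [Fintype V] [Fintype W] [DecidableEq V]
    (G : SimpleGraph V) (hmc : MatchingCovered G) (v₀ v₁ v₂ : V) (h12 : v₁ ≠ v₂)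
    (hnbr : G.neighborSet v₀ = {v₁, v₂})
    (K : SimpleGraph W) (hdeg : ∀ w : W, (K.neighborSet w).ncard ≤ 3)
    (hbased : IsBasedOn (bicontract G v₀ v₁ v₂) K) :
    IsBasedOn G K :=
  bicontract_based_implies_based_general G v₀ v₁ v₂ hnbr K hdeg hbased
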